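/- Let D be an (n,α,p)-pseudorandom digraph with p = ω((log n)^8/n), γ ∈ (0,1), ℓ ≥ 5·log n, t ≥ 4(log n)^2/p, and let {(a_i,b_i)}_{i=1}^t be pairs with distinct a_i's and distinct b_i's. Let R_A, R_B be disjoint subsets of V(D) avoiding all a_i, b_i such that |R_A|, |R_B| ≥ 12tℓ/γ, and for X ∈ {A,B} and every S ⊆ R_A ∪ R_B ∪ ∪_i{a_i,b_i} with |S| ≥ (log n)^2/p we have |N^+(S,R_X)|, |N^−(S,R_X)| ≥ (1/2+γ)|R_X|. Then for any σ ∈ {+,−}^ℓ there exist an index set I ⊆ [t] of size ⌊t/2⌋ and ⌊t/2⌋ internally disjoint σ-walks P_i (i ∈ I) connecting a_i to b_i with all internal vertices in R_A ∪ R_B. -/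

import Mathlib

open Filter

def outDeg {n : ℕ} (D : Fin n → Fin n → Bool) (v : Fin n) (S : Finset (Fin n)) : ℕ :=
  (S.filter fun w => D v w = true).card

def inDeg {n : ℕ} (D : Fin n → Fin n → Bool) (v : Fin n) (S : Finset (Fin n)) : ℕ :=
  (S.filter fun w => D w v = true).card

def arcsIn {n : ℕ} (D : Fin n → Fin n → Bool) (X : Finset (Fin n)) : ℕ :=
  ((X ×ˢ X).filter fun e => D e.1 e.2 = true).card

def arcsBetween {n : ℕ} (D : Fin n → Fin n → Bool) (X Y : Finset (Fin n)) : ℕ :=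
  ((X ×ˢ Y).filter fun e => D e.1 e.2 = true).card

/-- An `(n, α, p)`-pseudorandom digraph, as in Definition 3.1 of the paper. -/
def IsPseudorandom (n : ℕ) (α p : ℝ) (D : Fin n → Fin n → Bool) : Prop :=
  (∀ v : Fin n, (1/2 + 2*α) * n * p ≤ (outDeg D v Finset.univ : ℝ) ∧
    (1/2 + 2*α) * n * p ≤ (inDeg D v Finset.univ : ℝ)) ∧
  (∀ X : Finset (Fin n), (X.card : ℝ) ≤ (Real.log n)^2 / p →
    (arcsIn D X : ℝ) ≤ (X.card : ℝ) * (Real.log n) ^ (2.1 : ℝ)) ∧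
  (∀ X Y : Finset (Fin n), Disjoint X Y →
    (Real.log n) ^ (1.1 : ℝ) / p ≤ (X.card : ℝ) →
    (Real.log n) ^ (1.1 : ℝ) / p ≤ (Y.card : ℝ) →
    (arcsBetween D X Y : ℝ) ≤ (1 + α/2) * X.card * Y.card * p)

/-- A `σ`-walk: all vertices distinct except possibly first = last, following
out-arcs at `+` (true) steps and in-arcs at `-` (false) steps. -/
def IsSigmaWalk {n ℓ : ℕ} (D : Fin n → Fin n → Bool) (σ : Fin ℓ → Bool)
    (f : Fin (ℓ+1) → Fin n) : Prop :=
  (∀ i : Fin ℓ, if σ i then D (f i.castSucc) (f i.succ) = true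
    else D (f i.succ) (f i.castSucc) = true) ∧
  (∀ i j : Fin (ℓ+1), f i = f j →
    i = j ∨ (i = 0 ∧ j = Fin.last ℓ) ∨ (i = Fin.last ℓ ∧ j = 0))

/-- `N^σ(A, B)`: vertices of `B` reachable from some vertex of `A` by a `σ`-walk
all of whose vertices other than the first lie in `B`. -/
def sigmaNbhd {n ℓ : ℕ} (D : Fin n → Fin n → Bool) (σ : Fin ℓ → Bool)
    (A B : Set (Fin n)) : Set (Fin n) :=
  {y | y ∈ B ∧ ∃ f : Fin (ℓ+1) → Fin n, IsSigmaWalk D σ f ∧ f 0 ∈ A ∧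
    f (Fin.last ℓ) = y ∧ ∀ i : Fin (ℓ+1), i ≠ 0 → f i ∈ B}

/-- `N^+(S, R)`: out-neighbours of `S` inside `R`. -/
def outNbhd {n : ℕ} (D : Fin n → Fin n → Bool) (S R : Finset (Fin n)) : Finset (Fin n) :=
  R.filter fun y => ∃ x ∈ S, D x y = true

/-- `N^-(S, R)`: in-neighbours of `S` inside `R`. -/
def inNbhd {n : ℕ} (D : Fin n → Fin n → Bool) (S R : Finset (Fin n)) : Finset (Fin n) :=
  R.filter fun y => ∃ x ∈ S, D y x = true

/-!
Walks are chosen greedily, one pair at a time, avoiding the interiors `U` of the walks chosen so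
far. In the reservoir `R_A \ U` we first delete a small set: a maximal union of sets of size
`< s = ⌈log² n / p⌉` with few neighbours. After that every set of size at most `s` expands by a
factor larger than `ℓ`, so breadth-first layers grown from `a_i` double in size until they reach
size `s`, after about `log₂ n` steps; symmetrically we grow layers backwards from `b_i` in `R_B`.
By the expansion hypothesis the two last layers each have more than half of `R_A` as neighbours,
so some vertex `v ∈ R_A` joins them, and tracing back through the layers gives the `σ`-walk
`a_i ⋯ v ⋯ b_i`. Fewer than `s` of the `a_i` (and of the `b_i`) have no neighbour left in the
reservoirs, so while fewer than `t / 2` walks are chosen a usable pair remains.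
-/

open Finset Function

namespace SigmaPaths

variable {V : Type*}

def nbhd (r : V → V → Bool) (X R : Finset V) : Finset V :=
  R.filter fun y => ∃ x ∈ X, r x y = true

lemma mem_nbhd {r : V → V → Bool} {X R : Finset V} {y : V} :
    y ∈ nbhd r X R ↔ y ∈ R ∧ ∃ x ∈ X, r x y = true :=
  mem_filter

lemma nbhd_subset (r : V → V → Bool) (X R : Finset V) : nbhd r X R ⊆ R :=
  filter_subset _ _

lemma nbhd_mono {r : V → V → Bool} {X X' R R' : Finset V} (hX : X ⊆ X') (hR : R ⊆ R') :
    nbhd r X R ⊆ nbhd r X' R' := fun y hy => by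
  obtain ⟨hyR, x, hx, hxy⟩ := mem_nbhd.1 hy
  exact mem_nbhd.2 ⟨hR hyR, x, hX hx, hxy⟩

def IsRelWalk (r : ℕ → V → V → Bool) (k : ℕ) (w : ℕ → V) : Prop :=
  ∀ j < k, r j (w j) (w (j + 1)) = true

lemma IsRelWalk.update_succ {r : ℕ → V → V → Bool} {k : ℕ} {w : ℕ → V} (hw : IsRelWalk r k w)
    {v : V} (hv : r k (w k) v = true) : IsRelWalk r (k + 1) (update w (k + 1) v) := by
  intro j hj
  rw [update_of_ne (by omega)]
  rcases Nat.lt_succ_iff_lt_or_eq.1 hj with hj | rfl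
  · rw [update_of_ne (by omega)]
    exact hw j hj
  · rw [update_self]
    exact hv

/-- `w₂` is read from the far end: `w₂ 0` is the last vertex of the glued walk. -/
lemma IsRelWalk.glue {r : ℕ → V → V → Bool} {k₁ k₂ : ℕ} {w₁ w₂ : ℕ → V}
    (h₁ : IsRelWalk r k₁ w₁) (h₂ : IsRelWalk (fun j u v => r (k₁ + k₂ - 1 - j) v u) k₂ w₂)
    (hmeet : w₁ k₁ = w₂ k₂) :
    IsRelWalk r (k₁ + k₂) fun j => if j ≤ k₁ then w₁ j else w₂ (k₁ + k₂ - j) := by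
  intro j hj
  by_cases hj₁ : j < k₁
  · simp only [if_pos hj₁.le, if_pos (show j + 1 ≤ k₁ by omega)]
    exact h₁ j hj₁
  · have hw : (if j ≤ k₁ then w₁ j else w₂ (k₁ + k₂ - j)) = w₂ (k₁ + k₂ - j) := by
      split_ifs
      · obtain rfl : j = k₁ := by omega
        rw [hmeet, Nat.add_sub_cancel_left]
      · rfl
    have h := h₂ (k₁ + k₂ - 1 - j) (by omega)
    dsimp only at h
    rw [show k₁ + k₂ - 1 - (k₁ + k₂ - 1 - j) = j by omega,
      show k₁ + k₂ - 1 - j + 1 = k₁ + k₂ - j by omega] at h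
    dsimp only
    rw [hw, if_neg (by omega), show k₁ + k₂ - (j + 1) = k₁ + k₂ - 1 - j by omega]
    exact h

section Layering

structure IsLayering (r : ℕ → V → V → Bool) (pool : Finset V) (x : V) (k : ℕ)
    (F : ℕ → Finset V) : Prop where
  zero : F 0 = {x}
  subset : ∀ j < k, F (j + 1) ⊆ pool
  pred : ∀ j < k, ∀ y ∈ F (j + 1), ∃ x ∈ F j, r j x y = true
  disjoint : ∀ j < k, ∀ i < j, Disjoint (F (i + 1)) (F (j + 1))

variable {r : ℕ → V → V → Bool} {pool : Finset V} {x : V} {k : ℕ} {F : ℕ → Finset V}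

lemma IsLayering.mono (hF : IsLayering r pool x k F) {pool' : Finset V} (h : pool ⊆ pool') :
    IsLayering r pool' x k F :=
  { hF with subset := fun j hj => (hF.subset j hj).trans h }

lemma IsLayering.eq_of_mem (hF : IsLayering r pool x k F) {i j : ℕ} (hi : i < k) (hj : j < k)
    {y : V} (hyi : y ∈ F (i + 1)) (hyj : y ∈ F (j + 1)) : i = j := by
  by_contra hne
  rcases Nat.lt_or_gt_of_ne hne with h | h
  · exact disjoint_left.1 (hF.disjoint j hj i h) hyi hyj
  · exact disjoint_left.1 (hF.disjoint i hi j h) hyj hyi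

lemma IsLayering.exists_walk (hF : IsLayering r pool x k F) :
    ∀ j ≤ k, ∀ y ∈ F j, ∃ w, IsRelWalk r j w ∧ w j = y ∧ ∀ i ≤ j, w i ∈ F i
  | 0, _, y, hy => ⟨fun _ => y, fun _ h => absurd h (Nat.not_lt_zero _), rfl,
      fun i hi => by rwa [Nat.le_zero.1 hi]⟩
  | j + 1, hj, y, hy => by
    obtain ⟨x', hx', hr⟩ := hF.pred j hj y hy
    obtain ⟨w, hw, hwj, hmem⟩ := hF.exists_walk j (by omega) x' hx'
    refine ⟨update w (j + 1) y, hw.update_succ (by rwa [hwj]), update_self .., fun i hi => ?_⟩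
    rcases Nat.lt_succ_iff_lt_or_eq.1 (Nat.lt_succ_of_le hi) with hi | rfl
    · rw [update_of_ne (by omega)]
      exact hmem i (by omega)
    · rw [update_self]
      exact hy

end Layering

lemma injOn_of_mem_isLayering {r r' : ℕ → V → V → Bool} {A B : Finset V} (hAB : Disjoint A B)
    {kf kb ℓ : ℕ} {x y : V} {F G : ℕ → Finset V} (hF : IsLayering r A x kf F)
    (hG : IsLayering r' B y kb G) {w : ℕ → V}
    (hw : ∀ j ∈ Ioo 0 ℓ, (∃ i < kf, j = i + 1 ∧ w j ∈ F (i + 1)) ∨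
      ∃ i < kb, j = ℓ - (i + 1) ∧ w j ∈ G (i + 1)) :
    Set.InjOn w (Ioo 0 ℓ) := by
  intro j hj j' hj' heq
  have hAB' := disjoint_left.1 hAB
  rcases hw j' hj' with ⟨i', hi', rfl, hw'⟩ | ⟨i', hi', rfl, hw'⟩ <;>
  rw [← heq] at hw' <;>
  rcases hw j hj with ⟨i, hi, rfl, hw⟩ | ⟨i, hi, rfl, hw⟩
  · rw [hF.eq_of_mem hi hi' hw hw']
  · exact absurd (hG.subset i hi hw) (hAB' (hF.subset i' hi' hw'))
  · exact absurd (hG.subset i' hi' hw') (hAB' (hF.subset i hi hw))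
  · rw [hG.eq_of_mem hi hi' hw hw']

structure IsPathIn (r : ℕ → V → V → Bool) (ℓ : ℕ) (R : Finset V) (x y : V) (w : ℕ → V) :
    Prop where
  walk : IsRelWalk r ℓ w
  first : w 0 = x
  last : w ℓ = y
  mem : ∀ j ∈ Ioo 0 ℓ, w j ∈ R
  injOn : Set.InjOn w (Ioo 0 ℓ)

lemma IsPathIn.mono {r : ℕ → V → V → Bool} {ℓ : ℕ} {R R' : Finset V} {x y : V} {w : ℕ → V}
    (hw : IsPathIn r ℓ R x y w) (h : R ⊆ R') : IsPathIn r ℓ R' x y w :=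
  { hw with mem := fun j hj => h (hw.mem j hj) }

/-- `nbhd (orient D true)` and `nbhd (orient D false)` are the paper's `N^+` and `N^-`. -/
def orient (D : V → V → Bool) : Bool → V → V → Bool
  | true => D
  | false => fun x y => D y x

lemma orient_swap (D : V → V → Bool) (c : Bool) (x y : V) : orient D c y x = orient D (!c) x y := by
  cases c <;> rfl

variable [DecidableEq V]

lemma nbhd_union_left (r : V → V → Bool) (X Y R : Finset V) :
    nbhd r (X ∪ Y) R = nbhd r X R ∪ nbhd r Y R := by
  ext y
  simp only [mem_union, mem_nbhd]
  grind

lemma nbhd_sdiff (r : V → V → Bool) (X R T : Finset V) :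
    nbhd r X (R \ T) = nbhd r X R \ T := by
  ext y
  simp only [Finset.mem_sdiff, mem_nbhd]
  tauto

lemma card_nbhd_le_card_nbhd_sdiff_add (r : V → V → Bool) (X R T : Finset V) :
    (nbhd r X R).card ≤ (nbhd r X (R \ T)).card + T.card := by
  rw [nbhd_sdiff]
  exact card_le_card_sdiff_add_card

def IsExpanding {κ : Type*} (ρ : κ → V → V → Bool) (P : Finset V) (s C : ℕ) : Prop :=
  ∀ c, ∀ X ⊆ P, X.Nonempty → X.card ≤ s → C * X.card < (nbhd (ρ c) X (P \ X)).card

section Blocker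

variable {κ : Type*} [Fintype κ] {ρ : κ → V → V → Bool} {pool : Finset V} {s C N : ℕ}

def IsSparseFamily (ρ : κ → V → V → Bool) (pool : Finset V) (s C : ℕ) (B : κ → Finset V) :
    Prop :=
  ∀ c, B c ⊆ pool ∧ (B c).card < s ∧
    (nbhd (ρ c) (B c) (pool \ univ.biUnion B)).card ≤ C * (B c).card

lemma IsSparseFamily.card_biUnion_le {B : κ → Finset V} (hB : IsSparseFamily ρ pool s C B) :
    (univ.biUnion B).card ≤ Fintype.card κ * s := by
  refine Finset.card_biUnion_le.trans ?_
  simpa using sum_le_card_nsmul univ (fun c => (B c).card) s fun c _ => (hB c).2.1.le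

variable [DecidableEq κ]

lemma biUnion_update_union (B : κ → Finset V) (c : κ) (X : Finset V) :
    univ.biUnion (update B c (B c ∪ X)) = univ.biUnion B ∪ X := by
  ext y
  simp only [mem_biUnion, mem_univ, true_and, mem_union, update_apply]
  constructor
  · rintro ⟨c', hc'⟩
    split_ifs at hc' with h
    · subst h
      exact (mem_union.1 hc').imp (fun hy => ⟨c', hy⟩) id
    · exact Or.inl ⟨c', hc'⟩
  · rintro (⟨c', hc'⟩ | hy)
    · refine ⟨c', ?_⟩
      split_ifs with h
      · subst h
        exact mem_union_left _ hc'
      · exact hc'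
    · exact ⟨c, by simp [hy]⟩

/-- `B c ∪ X` stays smaller than `s`: otherwise its neighbourhood, which lies in `⋃ B ∪ X` up to
the few neighbours of `B c` and of `X`, would be smaller than `N`. -/
lemma IsSparseFamily.update_union {B : κ → Finset V} (hB : IsSparseFamily ρ pool s C B)
    (hexp : ∀ c, ∀ P ⊆ pool, s ≤ P.card → N ≤ (nbhd (ρ c) P pool).card)
    (hN : C * (2 * s) + (Fintype.card κ + 1) * s < N)
    {c : κ} {X : Finset V} (hX : X ⊆ pool \ univ.biUnion B) (hXs : X.card ≤ s)
    (hXsparse : (nbhd (ρ c) X ((pool \ univ.biUnion B) \ X)).card ≤ C * X.card) :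
    IsSparseFamily ρ pool s C (update B c (B c ∪ X)) := by
  have hXpool : X ⊆ pool := hX.trans sdiff_subset
  have hXB : Disjoint (univ.biUnion B) X := disjoint_of_subset_right hX disjoint_sdiff
  have hBcX : Disjoint (B c) X :=
    disjoint_of_subset_left (subset_biUnion_of_mem B (mem_univ c)) hXB
  have hsdiff : pool \ (univ.biUnion B ∪ X) = (pool \ univ.biUnion B) \ X :=
    (sdiff_sdiff_left ..).symm
  have hpool : pool \ univ.biUnion (update B c (B c ∪ X)) = (pool \ univ.biUnion B) \ X := by
    rw [biUnion_update_union, hsdiff]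
  have hsmall : (nbhd (ρ c) (B c ∪ X) ((pool \ univ.biUnion B) \ X)).card ≤
      C * (B c ∪ X).card := by
    rw [nbhd_union_left, card_union_of_disjoint hBcX, mul_add]
    refine (card_union_le _ _).trans (add_le_add ?_ hXsparse)
    exact (card_le_card (nbhd_mono Subset.rfl sdiff_subset)).trans (hB c).2.2
  have hlt : (B c ∪ X).card < s := by
    by_contra! hge
    have hunion : (univ.biUnion B ∪ X).card ≤ Fintype.card κ * s + s :=
      (card_union_le _ _).trans (add_le_add hB.card_biUnion_le hXs)
    have hlarge := hexp c _ (union_subset (hB c).1 hXpool) hge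
    have hcover := card_nbhd_le_card_nbhd_sdiff_add (ρ c) (B c ∪ X) pool (univ.biUnion B ∪ X)
    rw [hsdiff] at hcover
    have hC : C * (B c ∪ X).card ≤ C * (2 * s) := by
      have := (hB c).2.1
      rw [card_union_of_disjoint hBcX]
      exact Nat.mul_le_mul_left C (by omega)
    have hring : (Fintype.card κ + 1) * s = Fintype.card κ * s + s := by ring
    omega
  intro c'
  rw [hpool]
  rcases eq_or_ne c' c with rfl | hc'
  · rw [update_self]
    exact ⟨union_subset (hB c').1 hXpool, hlt, hsmall⟩
  · rw [update_of_ne hc']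
    exact ⟨(hB c').1, (hB c').2.1,
      (card_le_card (nbhd_mono Subset.rfl sdiff_subset)).trans (hB c').2.2⟩

/-- A sparse family with maximal union works: a non-expanding `X` could be added to it. -/
theorem exists_isExpanding_sdiff (hs : 1 ≤ s)
    (hexp : ∀ c, ∀ P ⊆ pool, s ≤ P.card → N ≤ (nbhd (ρ c) P pool).card)
    (hN : C * (2 * s) + (Fintype.card κ + 1) * s < N) :
    ∃ B ⊆ pool, B.card ≤ Fintype.card κ * s ∧ IsExpanding ρ (pool \ B) s C := by
  classical
  set cands := (Fintype.piFinset fun _ : κ => pool.powerset).filter (IsSparseFamily ρ pool s C)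
  have hempty : (fun _ => ∅) ∈ cands :=
    mem_filter.2 ⟨by simp, fun c => ⟨empty_subset _, hs, by simp [nbhd]⟩⟩
  obtain ⟨B, hBmem, hBmax⟩ := exists_max_image cands (fun B => (univ.biUnion B).card) ⟨_, hempty⟩
  have hB : IsSparseFamily ρ pool s C B := (mem_filter.1 hBmem).2
  refine ⟨univ.biUnion B, biUnion_subset.2 fun c _ => (hB c).1, hB.card_biUnion_le, ?_⟩
  intro c X hX hXne hXs
  by_contra! hXsparse
  have hB' := hB.update_union hexp hN hX hXs hXsparse
  have hle := hBmax _ <|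
    mem_filter.2 ⟨Fintype.mem_piFinset.2 fun c' => mem_powerset.2 (hB' c').1, hB'⟩
  rw [biUnion_update_union,
    card_union_of_disjoint (disjoint_of_subset_right hX disjoint_sdiff)] at hle
  have := hXne.card_pos
  omega

end Blocker

section Layering

variable {r : ℕ → V → V → Bool} {pool : Finset V} {x : V} {k : ℕ} {F : ℕ → Finset V}

lemma IsLayering.update (hF : IsLayering r pool x k F) {Y : Finset V} (hY : Y ⊆ pool)
    (hYF : Disjoint Y ((range k).biUnion fun j => F (j + 1)))
    (hpred : ∀ y ∈ Y, ∃ x ∈ F k, r k x y = true) :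
    IsLayering r pool x (k + 1) (update F (k + 1) Y) where
  zero := by rw [update_of_ne (by omega), hF.zero]
  subset j hj := by
    rcases Nat.lt_succ_iff_lt_or_eq.1 hj with hj | rfl
    · rw [update_of_ne (by omega)]
      exact hF.subset j hj
    · rwa [update_self]
  pred j hj y hy := by
    rw [update_of_ne (by omega)]
    rcases Nat.lt_succ_iff_lt_or_eq.1 hj with hj | rfl
    · rw [update_of_ne (by omega)] at hy
      exact hF.pred j hj y hy
    · rw [update_self] at hy
      exact hpred y hy
  disjoint j hj i hi := by
    rw [update_of_ne (by omega)]
    rcases Nat.lt_succ_iff_lt_or_eq.1 hj with hj | rfl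
    · rw [update_of_ne (by omega)]
      exact hF.disjoint j hj i hi
    · rw [update_self]
      exact (disjoint_of_subset_right (subset_biUnion_of_mem _ (mem_range.2 hi)) hYF).symm

lemma min_two_pow_add_sum_le {s C k : ℕ} (hC : k + 4 ≤ C) :
    min (2 ^ (k + 1)) s + ∑ j ∈ range (k + 1), min (2 ^ j) s ≤ C * min (2 ^ k) s := by
  have hgeom : ∑ j ∈ range (k + 1), min (2 ^ j) s < 2 ^ (k + 1) :=
    (sum_le_sum fun j _ => min_le_left _ _).trans_lt
      (Nat.geomSum_lt le_rfl fun j hj => mem_range.1 hj)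
  have hlin : ∑ j ∈ range (k + 1), min (2 ^ j) s ≤ (k + 1) * s := by
    simpa using sum_le_card_nsmul (range (k + 1)) _ s fun j _ => min_le_right _ _
  rcases le_total (2 ^ k) s with h | h
  · have h4 : 4 * 2 ^ k ≤ C * 2 ^ k := Nat.mul_le_mul_right _ (by omega)
    rw [min_eq_left h]
    rw [pow_succ] at hgeom ⊢
    omega
  · have hks : (k + 2) * s ≤ C * s := Nat.mul_le_mul_right _ (by omega)
    have hring : (k + 2) * s = (k + 1) * s + s := by ring
    rw [min_eq_right h]
    omega

/-- Each new layer is taken among the neighbours of the last one outside all earlier layers;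
`min_two_pow_add_sum_le` says that there is room. -/
theorem exists_isLayering {s C : ℕ} (hs : 1 ≤ s) (hblock : IsExpanding r pool s C)
    {x₀ x₁ : V} (hx₁ : x₁ ∈ pool) (h01 : r 0 x₀ x₁ = true) :
    ∀ k, k + 3 ≤ C → ∃ F, IsLayering r pool x₀ k F ∧ ∀ j < k, (F (j + 1)).card = min (2 ^ j) s
  | 0, _ => ⟨fun _ => {x₀}, ⟨rfl, by simp, by simp, by simp⟩, by simp⟩
  | k + 1, hk => by
    obtain ⟨F, hF, hcard⟩ := exists_isLayering hs hblock hx₁ h01 k (by omega)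
    set U := (range k).biUnion fun j => F (j + 1)
    suffices ∃ Y ⊆ pool, Disjoint Y U ∧ (∀ y ∈ Y, ∃ x ∈ F k, r k x y = true) ∧
        Y.card = min (2 ^ k) s by
      obtain ⟨Y, hY, hYU, hpred, hYcard⟩ := this
      refine ⟨_, hF.update hY hYU hpred, fun j hj => ?_⟩
      rcases Nat.lt_succ_iff_lt_or_eq.1 hj with hj | rfl
      · rw [update_of_ne (by omega)]
        exact hcard j hj
      · rwa [update_self]
    rcases k with _ | k
    · exact ⟨{x₁}, by simpa using hx₁, by simp [U], by simpa [hF.zero] using h01,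
        by simpa using hs⟩
    have hX : F (k + 1) ⊆ pool := hF.subset k (by omega)
    have hXcard := hcard k (by omega)
    have hXne : (F (k + 1)).Nonempty := by
      rw [← card_pos, hXcard]
      exact lt_min (Nat.two_pow_pos k) hs
    have hexp := hblock (k + 1) _ hX hXne (by rw [hXcard]; exact min_le_right _ _)
    have hU : U.card ≤ ∑ j ∈ range (k + 1), min (2 ^ j) s :=
      card_biUnion_le.trans (sum_le_sum fun j hj => (hcard j (mem_range.1 hj)).le)
    have hroom := min_two_pow_add_sum_le (s := s) (show k + 4 ≤ C by omega)
    have hsplit :=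
      card_le_card_sdiff_add_card (s := nbhd (r (k + 1)) (F (k + 1)) (pool \ F (k + 1))) (t := U)
    rw [← hXcard] at hroom
    obtain ⟨Y, hY, hYcard⟩ := exists_subset_card_eq (show min (2 ^ (k + 1)) s ≤
      (nbhd (r (k + 1)) (F (k + 1)) (pool \ F (k + 1)) \ U).card by omega)
    refine ⟨Y, fun y hy => ?_, disjoint_of_subset_left hY sdiff_disjoint, fun y hy => ?_, hYcard⟩
    · exact sdiff_subset (nbhd_subset _ _ _ (sdiff_subset (hY hy)))
    · exact (mem_nbhd.1 (sdiff_subset (hY hy))).2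

theorem exists_isLayering_card_eq {s C k : ℕ} (hs : 1 ≤ s) (hblock : IsExpanding r pool s C)
    {x₀ x₁ : V} (hx₁ : x₁ ∈ pool) (h01 : r 0 x₀ x₁ = true) (hk : s ≤ 2 ^ k) (hC : k + 4 ≤ C) :
    ∃ F, IsLayering r pool x₀ (k + 1) F ∧ (F (k + 1)).card = s ∧
      ((range (k + 1)).biUnion fun j => F (j + 1)).card ≤ (k + 1) * s := by
  obtain ⟨F, hF, hcard⟩ := exists_isLayering hs hblock hx₁ h01 (k + 1) hC
  refine ⟨F, hF, (hcard k k.lt_succ_self).trans (min_eq_right hk), card_biUnion_le.trans ?_⟩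
  simpa using sum_le_card_nsmul (range (k + 1)) _ s fun j hj =>
    (hcard j (mem_range.1 hj)).trans_le (min_le_right _ _)

end Layering

theorem exists_isPathIn_of_isLayering {r : ℕ → V → V → Bool} {A B : Finset V}
    (hAB : Disjoint A B) {kf kb ℓ : ℕ} (hℓ : kf + kb + 1 = ℓ) {x y v : V} {F G : ℕ → Finset V}
    (hF : IsLayering r A x kf F) (hG : IsLayering (fun j u w => r (ℓ - 1 - j) w u) B y kb G)
    (hv : v ∈ F kf) (hvG : ∃ u ∈ G kb, r kf v u = true) :
    ∃ w, IsPathIn r ℓ (A ∪ B) x y w := by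
  subst hℓ
  obtain ⟨wf, hwf, hwfv, hwfF⟩ := hF.exists_walk kf le_rfl v hv
  obtain ⟨u, hu, hvu⟩ := hvG
  obtain ⟨wb, hwb, hwbu, hwbG⟩ := hG.exists_walk kb le_rfl u hu
  have hwb' := hwb.update_succ (v := v) (by simpa [hwbu, show kf + kb - kb = kf by omega])
  set ℓ := kf + kb + 1
  set w : ℕ → V := fun j => if j ≤ kf then wf j else update wb (kb + 1) v (kf + (kb + 1) - j)
  have hwalk : IsRelWalk r ℓ w := by
    rw [show ℓ = kf + (kb + 1) by omega]
    refine IsRelWalk.glue hwf ?_ (by simpa using hwfv)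
    simpa only [show kf + (kb + 1) - 1 = kf + kb + 1 - 1 by omega] using hwb'
  have hclass : ∀ j ∈ Ioo 0 ℓ, (∃ i < kf, j = i + 1 ∧ w j ∈ F (i + 1)) ∨
      ∃ i < kb, j = ℓ - (i + 1) ∧ w j ∈ G (i + 1) := by
    intro j hj
    obtain ⟨hj0, hjℓ⟩ := mem_Ioo.1 hj
    by_cases h : j ≤ kf
    · refine Or.inl ⟨j - 1, by omega, by omega, ?_⟩
      simp only [w, if_pos h]
      exact Nat.sub_add_cancel hj0 ▸ hwfF j h
    · refine Or.inr ⟨ℓ - j - 1, by omega, by omega, ?_⟩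
      simp only [w, if_neg h, update_of_ne (show kf + (kb + 1) - j ≠ kb + 1 by omega)]
      rw [show ℓ - j - 1 + 1 = kf + (kb + 1) - j by omega]
      exact hwbG _ (by omega)
  refine ⟨w, hwalk, by simpa [w, hF.zero] using hwfF 0 (Nat.zero_le _), ?_, ?_,
    injOn_of_mem_isLayering hAB hF hG hclass⟩
  · simp only [w, if_neg (show ¬ ℓ ≤ kf by omega), show kf + (kb + 1) - ℓ = 0 by omega,
      update_of_ne (show 0 ≠ kb + 1 by omega)]
    simpa [hG.zero] using hwbG 0 (Nat.zero_le _)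
  · intro j hj
    rcases hclass j hj with ⟨i, hi, -, hw⟩ | ⟨i, hi, -, hw⟩
    · exact mem_union_left _ (hF.subset i hi hw)
    · exact mem_union_right _ (hG.subset i hi hw)

theorem exists_isExpanding_subset (D : V → V → Bool) {A R U : Finset V} (hR : R ⊆ A) {s C N : ℕ}
    (hs : 1 ≤ s) (hexp : ∀ c, ∀ S ⊆ A, s ≤ S.card → N ≤ (nbhd (orient D c) S R).card)
    (hN : C * (2 * s) + 3 * s + U.card < N) :
    ∃ P ⊆ R \ U, (∀ c, ∀ S ⊆ A, s ≤ S.card → (nbhd (orient D c) S P).Nonempty) ∧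
      IsExpanding (orient D) P s C := by
  obtain ⟨B, -, hBcard, hblock⟩ := exists_isExpanding_sdiff (ρ := orient D) (pool := R \ U)
    (C := C) (N := N - U.card) hs
    (fun c P hP hPs => by
      have := card_nbhd_le_card_nbhd_sdiff_add (orient D c) P R U
      have := hexp c P (hP.trans (sdiff_subset.trans hR)) hPs
      omega)
    (by rw [Fintype.card_bool]; omega)
  refine ⟨(R \ U) \ B, sdiff_subset, fun c S hS hSs => ?_, hblock⟩
  have hexpS := hexp c S hS hSs
  have hcover := card_nbhd_le_card_nbhd_sdiff_add (orient D c) S R (U ∪ B)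
  have hUB := card_union_le U B
  rw [show R \ (U ∪ B) = (R \ U) \ B from (sdiff_sdiff_left ..).symm] at hcover
  rw [Fintype.card_bool] at hBcard
  exact card_pos.1 (by omega)

lemma card_filter_nbhd_singleton_eq_empty_lt {ι : Type*} {r : V → V → Bool} {R : Finset V}
    {f : ι → V} {J : Finset ι} {s : ℕ}
    (h : ∀ S ⊆ J, S.card = s → (nbhd r (S.image f) R).Nonempty) :
    (J.filter fun i => nbhd r {f i} R = ∅).card < s := by
  by_contra! hs
  obtain ⟨S, hS, hScard⟩ := exists_subset_card_eq hs
  obtain ⟨y, hy⟩ := h S (hS.trans (filter_subset _ _)) hScard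
  obtain ⟨hyR, x, hx, hxy⟩ := mem_nbhd.1 hy
  obtain ⟨i, hi, rfl⟩ := mem_image.1 hx
  have hempty := (mem_filter.1 (hS hi)).2
  exact eq_empty_iff_forall_notMem.1 hempty y (mem_nbhd.2 ⟨hyR, f i, mem_singleton_self _, hxy⟩)

lemma exists_nbhd_singleton_nonempty {ι : Type*} {r r' : V → V → Bool} {R R' : Finset V}
    {a b : ι → V} {J : Finset ι} {s : ℕ}
    (ha : ∀ S ⊆ J, S.card = s → (nbhd r (S.image a) R).Nonempty)
    (hb : ∀ S ⊆ J, S.card = s → (nbhd r' (S.image b) R').Nonempty) (hJ : 2 * s ≤ J.card + 1) :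
    ∃ i ∈ J, (nbhd r {a i} R).Nonempty ∧ (nbhd r' {b i} R').Nonempty := by
  classical
  set dead := J.filter (fun i => nbhd r {a i} R = ∅) ∪ J.filter (fun i => nbhd r' {b i} R' = ∅)
  have hdeadA := card_filter_nbhd_singleton_eq_empty_lt ha
  have hdeadB := card_filter_nbhd_singleton_eq_empty_lt hb
  have hdead : dead.card ≤ _ := card_union_le _ _
  have hsplit := card_le_card_sdiff_add_card (s := J) (t := dead)
  obtain ⟨i, hi⟩ := card_pos.1 (show 0 < (J \ dead).card by omega)
  simp only [dead, Finset.mem_sdiff, mem_union, mem_filter, not_or, not_and] at hi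
  exact ⟨i, hi.1, nonempty_iff_ne_empty.2 (hi.2.1 hi.1), nonempty_iff_ne_empty.2 (hi.2.2 hi.1)⟩

lemma exists_mem_nbhd_inter {r r' : V → V → Bool} {X Y R T : Finset V} {N : ℕ}
    (hX : N ≤ (nbhd r X R).card) (hY : N ≤ (nbhd r' Y R).card)
    (hN : R.card + 2 * T.card < 2 * N) :
    ∃ v ∈ R \ T, (∃ u ∈ X, r u v = true) ∧ ∃ u ∈ Y, r' u v = true := by
  have hXT := card_nbhd_le_card_nbhd_sdiff_add r X R T
  have hYT := card_nbhd_le_card_nbhd_sdiff_add r' Y R T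
  have hsum := card_union_add_card_inter (nbhd r X (R \ T)) (nbhd r' Y (R \ T))
  have hunion : (nbhd r X (R \ T) ∪ nbhd r' Y (R \ T)).card ≤ R.card :=
    card_le_card (union_subset ((nbhd_subset ..).trans sdiff_subset)
      ((nbhd_subset ..).trans sdiff_subset))
  obtain ⟨v, hv⟩ := card_pos.1 (show 0 < (nbhd r X (R \ T) ∩ nbhd r' Y (R \ T)).card by omega)
  obtain ⟨hvX, hvY⟩ := mem_inter.1 hv
  exact ⟨v, (mem_nbhd.1 hvX).1, (mem_nbhd.1 hvX).2, (mem_nbhd.1 hvY).2⟩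

theorem exists_isPathIn_of_isExpanding (D : V → V → Bool) (σ : ℕ → Bool)
    {A RA RB U PA PB : Finset V} (hRA : RA ⊆ A) (hRB : RB ⊆ A) (hAB : Disjoint RA RB)
    (hPA : PA ⊆ RA \ U) (hPB : PB ⊆ RB \ U) {s k ℓ NA : ℕ} (hs : 1 ≤ s) (hk : s ≤ 2 ^ k)
    (hkℓ : 2 * k + 4 ≤ ℓ) (hexp : ∀ c, ∀ S ⊆ A, s ≤ S.card → NA ≤ (nbhd (orient D c) S RA).card)
    (hmeet : RA.card + 2 * U.card + ℓ * s < 2 * NA)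
    (hexpA : IsExpanding (orient D) PA s ℓ) (hexpB : IsExpanding (orient D) PB s ℓ)
    {x y x₁ y₁ : V} (hx₁ : x₁ ∈ nbhd (orient D (σ 0)) {x} PA)
    (hy₁ : y₁ ∈ nbhd (orient D (!σ (ℓ - 1))) {y} PB) :
    ∃ w, IsPathIn (fun j => orient D (σ j)) ℓ ((RA ∪ RB) \ U) x y w := by
  -- forward layers `1, …, k + 1` in `PA` and backward layers `1, …, ℓ - k - 3` in `PB`
  obtain ⟨F, hF, hFcard, hprev⟩ := exists_isLayering_card_eq (r := fun j => orient D (σ j)) hs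
    (fun j => hexpA (σ j)) (mem_nbhd.1 hx₁).1 (by simpa using (mem_nbhd.1 hx₁).2) hk
    (show k + 4 ≤ ℓ by omega)
  obtain ⟨G, hG, hGcard, -⟩ := exists_isLayering_card_eq
    (r := fun j => orient D (!σ (ℓ - 1 - j))) hs (fun j => hexpB _) (mem_nbhd.1 hy₁).1
    (by simpa using (mem_nbhd.1 hy₁).2)
    (hk.trans (Nat.pow_le_pow_right two_pos (show k ≤ ℓ - k - 4 by omega)))
    (show ℓ - k - 4 + 4 ≤ ℓ by omega)
  have hrev : (fun j u w => orient D (σ (ℓ - 1 - j)) w u) =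
      fun j => orient D (!σ (ℓ - 1 - j)) := by
    funext j u w
    exact orient_swap ..
  rw [← hrev] at hG
  have hFA := (hF.subset k k.lt_succ_self).trans ((hPA.trans sdiff_subset).trans hRA)
  have hGA := (hG.subset _ (ℓ - k - 4).lt_succ_self).trans ((hPB.trans sdiff_subset).trans hRB)
  obtain ⟨v, hv, hFv, u, hu, huv⟩ := exists_mem_nbhd_inter
    (T := U ∪ (range (k + 1)).biUnion fun j => F (j + 1)) (hexp (σ (k + 1)) _ hFA hFcard.ge)
    (hexp (!σ (k + 2)) _ hGA hGcard.ge) (by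
      have := card_union_le U ((range (k + 1)).biUnion fun j => F (j + 1))
      have : 2 * ((k + 1) * s) ≤ ℓ * s := by
        rw [← mul_assoc]
        exact Nat.mul_le_mul_right _ (by omega)
      omega)
  rw [sdiff_union_distrib, mem_inter] at hv
  -- the meeting vertex `v` becomes one more forward layer
  have hF' := (hF.mono hPA).update (singleton_subset_iff.2 hv.1)
    (disjoint_singleton_left.2 (Finset.mem_sdiff.1 hv.2).2) (by simpa using hFv)
  rw [union_sdiff_distrib]
  refine exists_isPathIn_of_isLayering (hAB.mono sdiff_subset sdiff_subset) (by omega) hF'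
    (hG.mono hPB) (by rw [update_self]; exact mem_singleton_self v) ⟨u, hu, ?_⟩
  rwa [orient_swap, Bool.not_not] at huv

theorem exists_isPathIn_avoiding (D : V → V → Bool) (σ : ℕ → Bool) {A RA RB U : Finset V}
    (hRA : RA ⊆ A) (hRB : RB ⊆ A) (hAB : Disjoint RA RB) {ι : Type*} {a b : ι → V}
    (ha : Injective a) (hb : Injective b) (haA : ∀ i, a i ∈ A) (hbA : ∀ i, b i ∈ A)
    {s k ℓ NA NB : ℕ} (hs : 1 ≤ s) (hk : s ≤ 2 ^ k) (hkℓ : 2 * k + 4 ≤ ℓ)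
    (hexpA : ∀ c, ∀ S ⊆ A, s ≤ S.card → NA ≤ (nbhd (orient D c) S RA).card)
    (hexpB : ∀ c, ∀ S ⊆ A, s ≤ S.card → NB ≤ (nbhd (orient D c) S RB).card)
    (hNA : ℓ * (2 * s) + 3 * s + U.card < NA) (hNB : ℓ * (2 * s) + 3 * s + U.card < NB)
    (hmeet : RA.card + 2 * U.card + ℓ * s < 2 * NA) {J : Finset ι} (hJ : 2 * s ≤ J.card + 1) :
    ∃ i ∈ J, ∃ w, IsPathIn (fun j => orient D (σ j)) ℓ ((RA ∪ RB) \ U) (a i) (b i) w := by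
  obtain ⟨PA, hPA, hPAnbhd, hPAexp⟩ := exists_isExpanding_subset D hRA hs hexpA hNA
  obtain ⟨PB, hPB, hPBnbhd, hPBexp⟩ := exists_isExpanding_subset D hRB hs hexpB hNB
  have himage {f : ι → V} (hf : Injective f) (hfA : ∀ i, f i ∈ A) (S : Finset ι)
      (hS : S.card = s) : S.image f ⊆ A ∧ s ≤ (S.image f).card :=
    ⟨image_subset_iff.2 fun i _ => hfA i, by rw [card_image_of_injective _ hf, hS]⟩
  obtain ⟨i, hiJ, ⟨x₁, hx₁⟩, y₁, hy₁⟩ := exists_nbhd_singleton_nonempty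
    (fun S _ hS => hPAnbhd (σ 0) _ (himage ha haA S hS).1 (himage ha haA S hS).2)
    (fun S _ hS => hPBnbhd (!σ (ℓ - 1)) _ (himage hb hbA S hS).1 (himage hb hbA S hS).2) hJ
  exact ⟨i, hiJ, exists_isPathIn_of_isExpanding D σ hRA hRB hAB hPA hPB hs hk hkℓ hexpA hmeet
    hPAexp hPBexp hx₁ hy₁⟩

lemma card_biUnion_image_Ioo_le {ι : Type*} (I : Finset ι) (P : ι → ℕ → V) (ℓ : ℕ) :
    (I.biUnion fun i => (Ioo 0 ℓ).image (P i)).card ≤ I.card * ℓ := by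
  refine card_biUnion_le.trans ((sum_le_card_nsmul _ _ ℓ fun i _ => ?_).trans (by simp))
  exact card_image_le.trans (by simp)

theorem exists_pairwiseDisjoint_isPathIn {ι : Type*} [Fintype ι] [DecidableEq ι]
    {r : ℕ → V → V → Bool} {ℓ : ℕ} {R : Finset V} {a b : ι → V} {m : ℕ}
    (hstep : ∀ U : Finset V, U.card ≤ m * ℓ → ∀ J : Finset ι, Fintype.card ι ≤ J.card + m →
      ∃ i ∈ J, ∃ w, IsPathIn r ℓ (R \ U) (a i) (b i) w) :
    ∃ I : Finset ι, I.card = m ∧ ∃ P : ι → ℕ → V,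
      (∀ i ∈ I, IsPathIn r ℓ R (a i) (b i) (P i)) ∧
      (I : Set ι).PairwiseDisjoint fun i => (Ioo 0 ℓ).image (P i) := by
  suffices ∀ q ≤ m, ∃ I : Finset ι, I.card = q ∧ ∃ P : ι → ℕ → V,
      (∀ i ∈ I, IsPathIn r ℓ R (a i) (b i) (P i)) ∧
      (I : Set ι).PairwiseDisjoint fun i => (Ioo 0 ℓ).image (P i) from this m le_rfl
  intro q hq
  induction q with
  | zero => exact ⟨∅, rfl, fun i _ => a i, by simp, by simp⟩
  | succ q ih =>
    obtain ⟨I, hIcard, P, hP, hdisj⟩ := ih (by omega)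
    set U := I.biUnion fun i => (Ioo 0 ℓ).image (P i)
    have hU : U.card ≤ m * ℓ := (card_biUnion_image_Ioo_le I P ℓ).trans
      (by rw [hIcard]; exact Nat.mul_le_mul_right _ (by omega))
    have hJ : Fintype.card ι ≤ (univ \ I).card + m := by
      rw [card_sdiff_of_subset (subset_univ I), card_univ]
      omega
    obtain ⟨i, hiJ, w, hw⟩ := hstep U hU _ hJ
    have hiI : i ∉ I := (Finset.mem_sdiff.1 hiJ).2
    refine ⟨insert i I, by rw [card_insert_of_notMem hiI, hIcard], update P i w, ?_, ?_⟩
    · intro j hj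
      rcases mem_insert.1 hj with rfl | hj
      · rw [update_self]
        exact hw.mono sdiff_subset
      · rw [update_of_ne (ne_of_mem_of_not_mem hj hiI)]
        exact hP j hj
    · rw [coe_insert]
      refine Set.PairwiseDisjoint.insert (fun j hj j' hj' hne => ?_) fun j hj _ => ?_
      · have := hdisj hj hj' hne
        simp only [Function.onFun] at this ⊢
        rwa [update_of_ne (ne_of_mem_of_not_mem hj hiI),
          update_of_ne (ne_of_mem_of_not_mem hj' hiI)]
      · rw [update_self, update_of_ne (ne_of_mem_of_not_mem hj hiI)]
        refine disjoint_left.2 fun y hy hy' => ?_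
        obtain ⟨j', hj', rfl⟩ := mem_image.1 hy
        exact (Finset.mem_sdiff.1 (hw.mem j' hj')).2 (mem_biUnion.2 ⟨j, hj, hy'⟩)

theorem exists_pairwiseDisjoint_isPathIn_orient (D : V → V → Bool) (σ : ℕ → Bool) {ι : Type*}
    [Fintype ι] [DecidableEq ι] {A RA RB : Finset V} (hRA : RA ⊆ A) (hRB : RB ⊆ A)
    (hAB : Disjoint RA RB) {a b : ι → V} (ha : Injective a) (hb : Injective b)
    (haA : ∀ i, a i ∈ A) (hbA : ∀ i, b i ∈ A) {s k ℓ NA NB : ℕ} (hs : 1 ≤ s)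
    (hst : 4 * s ≤ Fintype.card ι + 3) (hk : s ≤ 2 ^ k) (hkℓ : 2 * k + 4 ≤ ℓ)
    (hexpA : ∀ c, ∀ S ⊆ A, s ≤ S.card → NA ≤ (nbhd (orient D c) S RA).card)
    (hexpB : ∀ c, ∀ S ⊆ A, s ≤ S.card → NB ≤ (nbhd (orient D c) S RB).card)
    (hNA : 12 * (Fintype.card ι * ℓ) ≤ NA) (hNB : 12 * (Fintype.card ι * ℓ) ≤ NB)
    (hmeet : RA.card + 24 * (Fintype.card ι * ℓ) ≤ 2 * NA) :
    ∃ I : Finset ι, I.card = Fintype.card ι / 2 ∧ ∃ P : ι → ℕ → V,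
      (∀ i ∈ I, IsPathIn (fun j => orient D (σ j)) ℓ (RA ∪ RB) (a i) (b i) (P i)) ∧
      (I : Set ι).PairwiseDisjoint fun i => (Ioo 0 ℓ).image (P i) := by
  set t := Fintype.card ι
  refine exists_pairwiseDisjoint_isPathIn fun U hU J hJ => ?_
  have hℓs : ℓ * s ≤ t * ℓ := (Nat.mul_le_mul_left ℓ (by omega)).trans (mul_comm ℓ t).le
  have hℓt : t * 3 ≤ t * ℓ := Nat.mul_le_mul_left t (by omega)
  have h2s : ℓ * (2 * s) = 2 * (ℓ * s) := by ring
  have hUt : 2 * U.card ≤ t * ℓ :=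
    (Nat.mul_le_mul_left 2 hU).trans (by rw [← mul_assoc]; exact Nat.mul_le_mul_right _ (by omega))
  exact exists_isPathIn_avoiding D σ hRA hRB hAB ha hb haA hbA hs hk hkℓ hexpA hexpB
    (by omega) (by omega) (by omega) (by omega)

lemma isSigmaWalk_of_isPathIn {n ℓ : ℕ} {D : Fin n → Fin n → Bool} {σ : Fin ℓ → Bool}
    {r : ℕ → Fin n → Fin n → Bool} (hr : ∀ j : Fin ℓ, r j = orient D (σ j))
    {R : Finset (Fin n)} {x y : Fin n} {w : ℕ → Fin n} (hw : IsPathIn r ℓ R x y w)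
    (hx : x ∉ R) (hy : y ∉ R) : IsSigmaWalk D σ fun j => w j := by
  refine ⟨fun j => ?_, fun i j hij => ?_⟩
  · have hj := hw.walk j j.isLt
    rw [hr j] at hj
    revert hj
    cases σ j <;> exact fun hj => by simpa [orient] using hj
  have hcases : ∀ i : Fin (ℓ + 1), i = 0 ∨ i = Fin.last ℓ ∨ (i : ℕ) ∈ Ioo 0 ℓ := by
    rintro ⟨i, hi⟩
    simp only [Fin.ext_iff, Fin.val_zero, Fin.val_last, mem_Ioo]
    omega
  have h0 : w ((0 : Fin (ℓ + 1)) : ℕ) = x := hw.first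
  have hℓ : w ((Fin.last ℓ : Fin (ℓ + 1)) : ℕ) = y := hw.last
  have hint : ∀ i : Fin (ℓ + 1), (i : ℕ) ∈ Ioo 0 ℓ → w i ≠ x ∧ w i ≠ y := fun i hi =>
    ⟨fun h => hx (h ▸ hw.mem i hi), fun h => hy (h ▸ hw.mem i hi)⟩
  dsimp only at hij
  rcases hcases i with rfl | rfl | hi <;> rcases hcases j with rfl | rfl | hj
  · exact Or.inl rfl
  · exact Or.inr (Or.inl ⟨rfl, rfl⟩)
  · exact absurd (hij ▸ h0) (hint j hj).1
  · exact Or.inr (Or.inr ⟨rfl, rfl⟩)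
  · exact Or.inl rfl
  · exact absurd (hij ▸ hℓ) (hint j hj).2
  · exact absurd (hij.symm ▸ h0) (hint i hi).1
  · exact absurd (hij.symm ▸ hℓ) (hint i hi).2
  · exact Or.inl (Fin.ext (hw.injOn hi hj hij))

lemma three_le_log {n : ℕ} (hn : 21 ≤ n) : 3 ≤ Real.log n := by
  rw [Real.le_log_iff_exp_le (by positivity)]
  calc Real.exp 3 = Real.exp 1 ^ 3 := by rw [← Real.exp_nat_mul]; norm_num
    _ ≤ 2.7182818286 ^ 3 := by gcongr; exact Real.exp_one_lt_d9.le
    _ ≤ 21 := by norm_num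
    _ ≤ n := by exact_mod_cast hn

lemma two_mul_natLog_add_six_le {n ℓ : ℕ} (hn : 21 ≤ n) (hℓ : 5 * Real.log n ≤ ℓ) :
    2 * Nat.log 2 n + 6 ≤ ℓ := by
  have hlog := three_le_log hn
  have hlog2 : (Nat.log 2 n : ℝ) * Real.log 2 ≤ Real.log n := by
    have := Real.natLog_le_logb n 2
    rwa [Real.logb, Nat.cast_ofNat, le_div_iff₀ (Real.log_pos one_lt_two)] at this
  have := mul_le_mul_of_nonneg_left Real.log_two_gt_d9.le (Nat.cast_nonneg (Nat.log 2 n))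
  exact_mod_cast (show ((2 * Nat.log 2 n + 6 : ℕ) : ℝ) ≤ ℓ by push_cast; linarith)

lemma ceil_log_sq_div_bounds {n t : ℕ} (hn : 21 ≤ n) {q : ℝ} (hq : 0 < q ∧ q < 1)
    (ht : 4 * Real.log n ^ 2 / q ≤ t) (htn : t ≤ n) :
    1 ≤ ⌈Real.log n ^ 2 / q⌉₊ ∧ 4 * ⌈Real.log n ^ 2 / q⌉₊ ≤ t + 3 ∧
      ⌈Real.log n ^ 2 / q⌉₊ ≤ 2 ^ (Nat.log 2 n + 1) := by
  have hx : 1 ≤ Real.log n ^ 2 / q := by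
    rw [le_div_iff₀ hq.1]
    nlinarith [three_le_log hn, hq.2]
  have hceil := Nat.ceil_lt_add_one (zero_le_one.trans hx)
  rw [mul_div_assoc] at ht
  have hst : 4 * ⌈Real.log n ^ 2 / q⌉₊ ≤ t + 3 := Nat.le_of_lt_succ <| by
    exact_mod_cast (show ((4 * ⌈Real.log n ^ 2 / q⌉₊ : ℕ) : ℝ) < t + 3 + 1 by push_cast; linarith)
  exact ⟨Nat.one_le_ceil_iff.2 (by linarith), hst,
    (show _ ≤ n by omega).trans (Nat.lt_pow_succ_log_self one_lt_two n).le⟩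

lemma ceil_half_add_mul_bounds {γ : ℝ} (hγ : 0 < γ) {m c : ℕ} (h : 12 * (c : ℝ) / γ ≤ m) :
    12 * c ≤ ⌈(1 / 2 + γ) * m⌉₊ ∧ m + 24 * c ≤ 2 * ⌈(1 / 2 + γ) * m⌉₊ := by
  rw [div_le_iff₀ hγ] at h
  have hceil := Nat.le_ceil ((1 / 2 + γ) * m)
  have hm : (0 : ℝ) ≤ m := Nat.cast_nonneg m
  constructor
  · exact_mod_cast (show (12 * c : ℝ) ≤ ⌈(1 / 2 + γ) * m⌉₊ by nlinarith)
  · exact_mod_cast (show (m + 24 * c : ℝ) ≤ 2 * ⌈(1 / 2 + γ) * m⌉₊ by nlinarith)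

lemma val_mem_Ioo_of_ne {ℓ : ℕ} {j : Fin (ℓ + 1)} (h0 : j ≠ 0) (hℓ : j ≠ Fin.last ℓ) :
    (j : ℕ) ∈ Ioo 0 ℓ := by
  rw [Ne, Fin.ext_iff, Fin.val_zero] at h0
  rw [Ne, Fin.ext_iff, Fin.val_last] at hℓ
  exact mem_Ioo.2 ⟨Nat.pos_of_ne_zero h0, lt_of_le_of_ne (Nat.lt_succ_iff.1 j.isLt) hℓ⟩

lemma ceil_le_card_nbhd_orient {n : ℕ} {D : Fin n → Fin n → Bool} {S R : Finset (Fin n)} {β : ℝ}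
    (h : β ≤ (outNbhd D S R).card ∧ β ≤ (inNbhd D S R).card) (c : Bool) :
    ⌈β⌉₊ ≤ (nbhd (orient D c) S R).card := by
  cases c
  · rw [show nbhd (orient D false) S R = inNbhd D S R from filter_congr_decidable _ _ _]
    exact Nat.ceil_le.2 h.2
  · rw [show nbhd (orient D true) S R = outNbhd D S R from filter_congr_decidable _ _ _]
    exact Nat.ceil_le.2 h.1

theorem exists_sigmaWalks_of_isPathIn {n ℓ : ℕ} {D : Fin n → Fin n → Bool} {σ : Fin ℓ → Bool}
    {ι : Type*} {a b : ι → Fin n} {R : Finset (Fin n)} (hab : ∀ i, a i ∉ R ∧ b i ∉ R)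
    {I : Finset ι} {P : ι → ℕ → Fin n}
    (hP : ∀ i ∈ I, IsPathIn (fun j => orient D (if h : j < ℓ then σ ⟨j, h⟩ else true)) ℓ R
      (a i) (b i) (P i))
    (hdisj : (I : Set ι).PairwiseDisjoint fun i => (Ioo 0 ℓ).image (P i)) :
    ∃ P' : ι → Fin (ℓ + 1) → Fin n,
      (∀ i ∈ I, IsSigmaWalk D σ (P' i)) ∧
      (∀ i ∈ I, P' i 0 = a i ∧ P' i (Fin.last ℓ) = b i) ∧
      (∀ i ∈ I, ∀ j : Fin (ℓ + 1), j ≠ 0 → j ≠ Fin.last ℓ → P' i j ∈ R) ∧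
      (∀ i ∈ I, ∀ i' ∈ I, i ≠ i' → ∀ j j' : Fin (ℓ + 1),
        j ≠ 0 → j ≠ Fin.last ℓ → j' ≠ 0 → j' ≠ Fin.last ℓ → P' i j ≠ P' i' j') := by
  refine ⟨fun i j => P i j, fun i hi => ?_, fun i hi => ?_,
    fun i hi j hj0 hjℓ => (hP i hi).mem j (val_mem_Ioo_of_ne hj0 hjℓ),
    fun i hi i' hi' hne j j' hj0 hjℓ hj'0 hj'ℓ heq => ?_⟩
  · exact isSigmaWalk_of_isPathIn (fun j => by simp) (hP i hi) (hab i).1 (hab i).2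
  · exact ⟨by simpa using (hP i hi).first, (hP i hi).last⟩
  · replace heq : P i j = P i' j' := heq
    exact disjoint_left.1 (hdisj hi hi' hne) (mem_image_of_mem _ (val_mem_Ioo_of_ne hj0 hjℓ))
      (heq ▸ mem_image_of_mem _ (val_mem_Ioo_of_ne hj'0 hj'ℓ))

end SigmaPaths

open SigmaPaths

theorem stmt_16_general (p : ℕ → ℝ) (hp : ∀ n, 0 < p n ∧ p n < 1)
    (D : (n : ℕ) → Fin n → Fin n → Bool)
    (γ : ℝ) (hγ0 : 0 < γ) :
    ∀ᶠ n : ℕ in atTop, ∀ t ℓ : ℕ,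
      5 * Real.log n ≤ (ℓ : ℝ) → 4 * (Real.log n) ^ 2 / p n ≤ (t : ℝ) →
      ∀ a b : Fin t → Fin n, Function.Injective a → Function.Injective b →
      ∀ R_A R_B : Finset (Fin n), Disjoint R_A R_B →
      (∀ i, a i ∉ R_A ∪ R_B ∧ b i ∉ R_A ∪ R_B) →
      12 * t * ℓ / γ ≤ (R_A.card : ℝ) → 12 * t * ℓ / γ ≤ (R_B.card : ℝ) →
      (∀ S ⊆ R_A ∪ R_B ∪ (Finset.image a Finset.univ ∪ Finset.image b Finset.univ),
        (Real.log n) ^ 2 / p n ≤ (S.card : ℝ) →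
        ((1/2 + γ) * R_A.card ≤ ((outNbhd (D n) S R_A).card : ℝ) ∧
          (1/2 + γ) * R_A.card ≤ ((inNbhd (D n) S R_A).card : ℝ)) ∧
        ((1/2 + γ) * R_B.card ≤ ((outNbhd (D n) S R_B).card : ℝ) ∧
          (1/2 + γ) * R_B.card ≤ ((inNbhd (D n) S R_B).card : ℝ))) →
      ∀ σ : Fin ℓ → Bool,
        ∃ I : Finset (Fin t), I.card = t / 2 ∧
          ∃ P : Fin t → Fin (ℓ + 1) → Fin n,
            (∀ i ∈ I, IsSigmaWalk (D n) σ (P i)) ∧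
            (∀ i ∈ I, P i 0 = a i ∧ P i (Fin.last ℓ) = b i) ∧
            (∀ i ∈ I, ∀ j : Fin (ℓ + 1), j ≠ 0 → j ≠ Fin.last ℓ →
              P i j ∈ R_A ∪ R_B) ∧
            (∀ i ∈ I, ∀ i' ∈ I, i ≠ i' → ∀ j j' : Fin (ℓ + 1),
              j ≠ 0 → j ≠ Fin.last ℓ → j' ≠ 0 → j' ≠ Fin.last ℓ →
              P i j ≠ P i' j') := by
  filter_upwards [eventually_ge_atTop 21] with n hn
  intro t ℓ hℓ ht a b ha hb R_A R_B hAB hab hRA hRB hexp σ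
  have htn : t ≤ n := by simpa using Fintype.card_le_of_injective a ha
  obtain ⟨hs, hst, hk⟩ := ceil_log_sq_div_bounds hn (hp n) ht htn
  obtain ⟨hNA, hmeet⟩ := ceil_half_add_mul_bounds hγ0 (c := t * ℓ) (m := R_A.card)
    (by push_cast; rwa [← mul_assoc])
  obtain ⟨hNB, -⟩ := ceil_half_add_mul_bounds hγ0 (c := t * ℓ) (m := R_B.card)
    (by push_cast; rwa [← mul_assoc])
  obtain ⟨I, hI, P, hP, hdisj⟩ := exists_pairwiseDisjoint_isPathIn_orient (D n)
    (fun j => if h : j < ℓ then σ ⟨j, h⟩ else true)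
    (A := R_A ∪ R_B ∪ (image a univ ∪ image b univ)) (subset_union_left.trans subset_union_left)
    (subset_union_right.trans subset_union_left) hAB ha hb (fun i => by simp) (fun i => by simp)
    hs (by simpa using hst) hk (by have := two_mul_natLog_add_six_le hn hℓ; omega)
    (fun c S hS hsS => ceil_le_card_nbhd_orient (hexp S hS (Nat.ceil_le.1 hsS)).1 c)
    (fun c S hS hsS => ceil_le_card_nbhd_orient (hexp S hS (Nat.ceil_le.1 hsS)).2 c)
    (by simpa using hNA) (by simpa using hNB) (by simpa using hmeet)
  exact ⟨I, by simpa using hI, exists_sigmaWalks_of_isPathIn hab hP hdisj⟩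

/-- Lemma 4.4: under expansion assumptions on the reservoirs `R_A, R_B`, at
least half of the given pairs can be connected by internally disjoint
`σ`-walks with interiors in `R_A ∪ R_B`. -/
theorem stmt_16 (α : ℝ) (hα : 0 < α) (p : ℕ → ℝ) (hp : ∀ n, 0 < p n ∧ p n < 1)
    (hω : Tendsto (fun n : ℕ => p n * n / (Real.log n) ^ 8) atTop atTop)
    (D : (n : ℕ) → Fin n → Fin n → Bool)
    (hD : ∀ n, IsPseudorandom n α (p n) (D n))
    (γ : ℝ) (hγ0 : 0 < γ) (hγ1 : γ < 1) :
    ∀ᶠ n : ℕ in atTop, ∀ t ℓ : ℕ,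
      5 * Real.log n ≤ (ℓ : ℝ) → 4 * (Real.log n) ^ 2 / p n ≤ (t : ℝ) →
      ∀ a b : Fin t → Fin n, Function.Injective a → Function.Injective b →
      ∀ R_A R_B : Finset (Fin n), Disjoint R_A R_B →
      (∀ i, a i ∉ R_A ∪ R_B ∧ b i ∉ R_A ∪ R_B) →
      12 * t * ℓ / γ ≤ (R_A.card : ℝ) → 12 * t * ℓ / γ ≤ (R_B.card : ℝ) →
      (∀ S ⊆ R_A ∪ R_B ∪ (Finset.image a Finset.univ ∪ Finset.image b Finset.univ),
        (Real.log n) ^ 2 / p n ≤ (S.card : ℝ) →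
        ((1/2 + γ) * R_A.card ≤ ((outNbhd (D n) S R_A).card : ℝ) ∧
          (1/2 + γ) * R_A.card ≤ ((inNbhd (D n) S R_A).card : ℝ)) ∧
        ((1/2 + γ) * R_B.card ≤ ((outNbhd (D n) S R_B).card : ℝ) ∧
          (1/2 + γ) * R_B.card ≤ ((inNbhd (D n) S R_B).card : ℝ))) →
      ∀ σ : Fin ℓ → Bool,
        ∃ I : Finset (Fin t), I.card = t / 2 ∧
          ∃ P : Fin t → Fin (ℓ + 1) → Fin n,
            (∀ i ∈ I, IsSigmaWalk (D n) σ (P i)) ∧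
            (∀ i ∈ I, P i 0 = a i ∧ P i (Fin.last ℓ) = b i) ∧
            (∀ i ∈ I, ∀ j : Fin (ℓ + 1), j ≠ 0 → j ≠ Fin.last ℓ →
              P i j ∈ R_A ∪ R_B) ∧
            (∀ i ∈ I, ∀ i' ∈ I, i ≠ i' → ∀ j j' : Fin (ℓ + 1),
              j ≠ 0 → j ≠ Fin.last ℓ → j' ≠ 0 → j' ≠ Fin.last ℓ →
              P i j ≠ P i' j') :=
  stmt_16_general p hp D γ hγ0
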